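/- arXiv:2409.12360 — 7 statements merged into one kernel-verified Lean document; each statement's English description precedes it below -/
import Mathlib

section
/- For every real s > 0 and every ζ ∈ (0, e), there exists M > 0 such that for every complex number μ with Re μ ≥ M one has ‖∫_{ζ}^{∞} r^s e^{−μ r} dr‖ ≤ (2 / Re μ) · e^{−(ζ/2)·Re μ}. -/
open MeasureTheory


open Real in
lemma integral_exp_neg_mul_Ioi {b : ℝ} (hb : 0 < b) (c : ℝ) :
    ∫ x in Set.Ioi c, Real.exp (-b * x) = Real.exp (-b * c) / b := by
  have hderiv : ∀ x ∈ Set.Ici c, HasDerivAt (fun x => -Real.exp (-b * x) / b)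
      (Real.exp (-b * x)) x := by
    intro x _
    have h := (((hasDerivAt_id x).const_mul (-b)).exp.neg).div_const b
    have : -(Real.exp (-b * id x) * (-b * 1)) / b = Real.exp (-b * x) := by
      simp only [id]; field_simp
    rw [this] at h
    simpa using h
  have htend : Filter.Tendsto (fun x : ℝ => -Real.exp (-b * x) / b) Filter.atTop (nhds 0) := by
    have : Filter.Tendsto (fun x : ℝ => -Real.exp (-b * x) / b) Filter.atTop (nhds (-0 / b)) := by
      refine Filter.Tendsto.div_const (Filter.Tendsto.neg ?_) _
      exact Real.tendsto_exp_atBot.comp (Filter.tendsto_id.const_mul_atTop_of_neg (by linarith))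
    simpa using this
  rw [integral_Ioi_of_hasDerivAt_of_tendsto' hderiv (exp_neg_integrableOn_Ioi c hb) htend]
  ring

set_option maxHeartbeats 1000000 in
/-- For every real `s > 0` and every `ζ ∈ (0, e)`, there exists `M > 0` such that for every
complex `μ` with `Re μ ≥ M` one has
`‖∫_{ζ}^{∞} r^s e^{−μ r} dr‖ ≤ (2 / Re μ) · e^{−(ζ/2)·Re μ}`. -/
theorem stmt_0 (s : ℝ) (hs : 0 < s) (ζ : ℝ) (hζ : ζ ∈ Set.Ioo (0 : ℝ) (Real.exp 1)) :
    ∃ M : ℝ, 0 < M ∧ ∀ μ : ℂ, M ≤ μ.re →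
      ‖∫ r in Set.Ioi ζ, ((r ^ s : ℝ) : ℂ) * Complex.exp (-μ * r)‖ ≤
        (2 / μ.re) * Real.exp (-(ζ / 2) * μ.re) := by
  refine ⟨2 * s + 1, by linarith, fun μ hμ => ?_⟩
  set a := μ.re with ha
  have ha0 : 0 < a := lt_of_lt_of_le (by linarith) hμ
  have hζ0 : 0 < ζ := hζ.1
  have hg : IntegrableOn (fun r => Real.exp (-(a / 2) * r)) (Set.Ioi ζ) :=
    exp_neg_integrableOn_Ioi ζ (by linarith)
  have hbound : ∀ r ∈ Set.Ioi ζ,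
      ‖((r ^ s : ℝ) : ℂ) * Complex.exp (-μ * r)‖ ≤ Real.exp (-(a / 2) * r) := by
    intro r hr
    have hr0 : 0 < r := hζ0.trans hr
    have h1 : ‖((r ^ s : ℝ) : ℂ)‖ = r ^ s := by
      rw [Complex.norm_real, Real.norm_eq_abs, abs_of_nonneg (Real.rpow_nonneg hr0.le s)]
    have h2 : ‖Complex.exp (-μ * r)‖ = Real.exp (-(a * r)) := by
      rw [Complex.norm_exp]
      congr 1
      simp [Complex.mul_re, ha]
    have key : r ^ s ≤ Real.exp (a / 2 * r) := by
      rcases le_or_gt r 1 with h | h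
      · calc r ^ s ≤ 1 := Real.rpow_le_one hr0.le h hs.le
          _ ≤ Real.exp (a / 2 * r) := Real.one_le_exp (by positivity)
      · rw [Real.rpow_def_of_pos hr0]
        apply Real.exp_le_exp.2
        have hlog : Real.log r ≤ r := (Real.log_le_sub_one_of_pos hr0).trans (by linarith)
        have hlog0 : 0 ≤ Real.log r := Real.log_nonneg h.le
        nlinarith
    rw [norm_mul, h1, h2]
    calc r ^ s * Real.exp (-(a * r))
        ≤ Real.exp (a / 2 * r) * Real.exp (-(a * r)) := by
          apply mul_le_mul_of_nonneg_right key (Real.exp_nonneg _)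
      _ = Real.exp (-(a / 2) * r) := by rw [← Real.exp_add]; ring_nf
  calc ‖∫ r in Set.Ioi ζ, ((r ^ s : ℝ) : ℂ) * Complex.exp (-μ * r)‖
      ≤ ∫ r in Set.Ioi ζ, Real.exp (-(a / 2) * r) :=
        norm_integral_le_of_norm_le hg (ae_restrict_of_forall_mem measurableSet_Ioi hbound)
    _ = Real.exp (-(a / 2) * ζ) / (a / 2) := integral_exp_neg_mul_Ioi (by linarith) ζ
    _ = (2 / a) * Real.exp (-(ζ / 2) * a) := by
        rw [show -(a / 2) * ζ = -(ζ / 2) * a by ring]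
        field_simp
end

section
/- For every real s > 0 and every ζ ∈ (0, e), there exists M > 0 such that for every complex number μ with Re μ ≥ M one has ‖∫_{0}^{ζ} r^s e^{−μ r} dr − Γ(s+1) / μ^{s+1}‖ ≤ (2 / Re μ) · e^{−(ζ/2)·Re μ}. -/
open MeasureTheory Set

namespace Stmt1Aux

lemma cont_integrand (s : ℝ) (hs : 0 ≤ s) (μ : ℂ) :
    Continuous fun t : ℝ => ((t ^ s : ℝ) : ℂ) * Complex.exp (-μ * t) := by
  apply Continuous.mul
  · exact Complex.continuous_ofReal.comp (continuous_iff_continuousAt.2 fun t =>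
      Real.continuousAt_rpow_const t s (Or.inr hs))
  · exact Complex.continuous_exp.comp (continuous_const.mul Complex.continuous_ofReal)

lemma norm_integrand {s t : ℝ} (ht : 0 ≤ t) (μ : ℂ) :
    ‖((t ^ s : ℝ) : ℂ) * Complex.exp (-μ * t)‖ = t ^ s * Real.exp (-μ.re * t) := by
  have hre : (-μ * (t : ℂ)).re = -μ.re * t := by simp
  rw [norm_mul, Complex.norm_real, Real.norm_eq_abs,
    Complex.norm_exp, hre, abs_of_nonneg (Real.rpow_nonneg ht s)]

lemma integrable_real (s : ℝ) (hs : -1 < s) {b : ℝ} (hb : 0 < b) :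
    IntegrableOn (fun t : ℝ => t ^ s * Real.exp (-b * t)) (Ioi 0) := by
  simpa using integrableOn_rpow_mul_exp_neg_mul_rpow hs zero_lt_one hb

lemma integrable_complex (s : ℝ) (hs : 0 < s) {μ : ℂ} (hμ : 0 < μ.re) :
    IntegrableOn (fun t : ℝ => ((t ^ s : ℝ) : ℂ) * Complex.exp (-μ * t)) (Ioi 0) := by
  refine (integrable_real s (by linarith) hμ).mono'
    ((cont_integrand s hs.le μ).aestronglyMeasurable.restrict) ?_
  filter_upwards [ae_restrict_mem measurableSet_Ioi] with t ht
  exact le_of_eq (norm_integrand (le_of_lt ht) μ)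

lemma f_diff (s : ℝ) (hs : 0 < s) {z : ℂ} (hz : 0 < z.re) :
    DifferentiableAt ℂ
      (fun w : ℂ => ∫ t in Ioi (0 : ℝ), ((t ^ s : ℝ) : ℂ) * Complex.exp (-w * t)) z := by
  set ε : ℝ := z.re / 2 with hε
  have hε0 : 0 < ε := by positivity
  have hmain := hasDerivAt_integral_of_dominated_loc_of_deriv_le
    (μ := volume.restrict (Ioi (0 : ℝ)))
    (F := fun (w : ℂ) (t : ℝ) => ((t ^ s : ℝ) : ℂ) * Complex.exp (-w * t))
    (F' := fun (w : ℂ) (t : ℝ) => ((t ^ s : ℝ) : ℂ) * (Complex.exp (-w * t) * (-(t : ℂ))))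
    (x₀ := z) (bound := fun t : ℝ => t ^ (s + 1) * Real.exp (-ε * t)) (Metric.ball_mem_nhds z hε0)
    (Filter.Eventually.of_forall fun w =>
      (cont_integrand s hs.le w).aestronglyMeasurable.restrict)
    (integrable_complex s hs hz) ?_ ?_ (integrable_real (s + 1) (by linarith) hε0) ?_
  · exact hmain.2.differentiableAt
  · -- measurability of F' z
    have hc : Continuous fun t : ℝ =>
        ((t ^ s : ℝ) : ℂ) * (Complex.exp (-z * t) * (-(t : ℂ))) := by
      apply Continuous.mul
      · exact Complex.continuous_ofReal.comp (continuous_iff_continuousAt.2 fun t =>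
          Real.continuousAt_rpow_const t s (Or.inr hs.le))
      · exact ((Complex.continuous_exp.comp
          (continuous_const.mul Complex.continuous_ofReal)).mul
          Complex.continuous_ofReal.neg)
    exact hc.aestronglyMeasurable.restrict
  · -- bound
    filter_upwards [ae_restrict_mem measurableSet_Ioi] with t ht w hw
    have ht0 : 0 < t := ht
    have hwre : ε ≤ w.re := by
      have h1 : |(w - z).re| ≤ ‖w - z‖ := Complex.abs_re_le_norm _
      have h2 : ‖w - z‖ < ε := by simpa [Metric.mem_ball, dist_eq_norm] using hw
      have := abs_le.mp (h1.trans h2.le)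
      have := this.1
      simp only [Complex.sub_re, neg_le_sub_iff_le_add] at this
      have : z.re - ε ≤ w.re := by linarith
      linarith [this, (by linarith : z.re - ε = ε)]
    have hnorm : ‖((t ^ s : ℝ) : ℂ) * (Complex.exp (-w * t) * (-(t : ℂ)))‖
        = t ^ s * (Real.exp (-w.re * t) * t) := by
      rw [norm_mul, norm_mul, Complex.norm_real, Real.norm_eq_abs, norm_neg,
        Complex.norm_real, Real.norm_eq_abs, Complex.norm_exp,
        abs_of_nonneg (Real.rpow_nonneg ht0.le s), abs_of_nonneg ht0.le]
      congr 2
      simp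
    rw [hnorm]
    have hts : t ^ (s + 1) = t ^ s * t := by
      rw [Real.rpow_add ht0, Real.rpow_one]
    rw [hts]
    have hexple : Real.exp (-w.re * t) ≤ Real.exp (-ε * t) := by
      apply Real.exp_le_exp.mpr
      nlinarith
    calc t ^ s * (Real.exp (-w.re * t) * t)
        ≤ t ^ s * (Real.exp (-ε * t) * t) := by
          apply mul_le_mul_of_nonneg_left _ (Real.rpow_nonneg ht0.le s)
          exact mul_le_mul_of_nonneg_right hexple ht0.le
      _ = t ^ s * t * Real.exp (-ε * t) := by ring
  · -- differentiability
    refine Filter.Eventually.of_forall fun t => fun w _ => ?_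
    have h1 : HasDerivAt (fun w : ℂ => -w * (t : ℂ)) (-(t : ℂ)) w := by
      simpa using ((hasDerivAt_id w).neg.mul_const (t : ℂ))
    exact (h1.cexp).const_mul _

lemma key_real (s : ℝ) (hs : 0 < s) {x : ℝ} (hx : 0 < x) :
    (∫ t in Ioi (0 : ℝ), ((t ^ s : ℝ) : ℂ) * Complex.exp (-(x : ℂ) * t)) =
      (Real.Gamma (s + 1) : ℂ) / (x : ℂ) ^ ((s : ℂ) + 1) := by
  have ha : 0 < ((s : ℂ) + 1).re := by simp; linarith
  have h := Complex.integral_cpow_mul_exp_neg_mul_Ioi ha hx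
  rw [show (s : ℂ) + 1 - 1 = (s : ℂ) by ring] at h
  have harg : ((x : ℂ)).arg ≠ Real.pi := by
    rw [Complex.arg_ofReal_of_nonneg hx.le]
    exact fun h => Real.pi_ne_zero h.symm
  have hgamma : Complex.Gamma ((s : ℂ) + 1) = (Real.Gamma (s + 1) : ℂ) := by
    rw [show (s : ℂ) + 1 = ((s + 1 : ℝ) : ℂ) by push_cast; ring, Complex.Gamma_ofReal]
  calc (∫ t in Ioi (0 : ℝ), ((t ^ s : ℝ) : ℂ) * Complex.exp (-(x : ℂ) * t))
      = ∫ t in Ioi (0 : ℝ), (t : ℂ) ^ (s : ℂ) * Complex.exp (-((x : ℂ) * t)) := by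
        refine setIntegral_congr_fun measurableSet_Ioi fun t ht => ?_
        rw [Complex.ofReal_cpow (le_of_lt ht), neg_mul]
    _ = (1 / (x : ℂ)) ^ ((s : ℂ) + 1) * Complex.Gamma ((s : ℂ) + 1) := h
    _ = (Real.Gamma (s + 1) : ℂ) / (x : ℂ) ^ ((s : ℂ) + 1) := by
        rw [one_div, Complex.inv_cpow _ _ harg, hgamma, div_eq_inv_mul, mul_comm]

lemma key (s : ℝ) (hs : 0 < s) {μ : ℂ} (hμ : 0 < μ.re) :
    (∫ t in Ioi (0 : ℝ), ((t ^ s : ℝ) : ℂ) * Complex.exp (-μ * t)) =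
      (Real.Gamma (s + 1) : ℂ) / μ ^ ((s : ℂ) + 1) := by
  set f : ℂ → ℂ := fun w => ∫ t in Ioi (0 : ℝ), ((t ^ s : ℝ) : ℂ) * Complex.exp (-w * t)
  set g : ℂ → ℂ := fun w => (Real.Gamma (s + 1) : ℂ) / w ^ ((s : ℂ) + 1)
  set U : Set ℂ := {z : ℂ | 0 < z.re}
  have hUopen : IsOpen U := isOpen_lt continuous_const Complex.continuous_re
  have hfa : AnalyticOnNhd ℂ f U := by
    apply DifferentiableOn.analyticOnNhd _ hUopen
    exact fun z hz => (f_diff s hs hz).differentiableWithinAt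
  have hga : AnalyticOnNhd ℂ g U := by
    apply DifferentiableOn.analyticOnNhd _ hUopen
    intro z hz
    have hz' : (0 : ℝ) < z.re := hz
    have hslit : z ∈ Complex.slitPlane := Complex.mem_slitPlane_iff.mpr (Or.inl hz')
    have hzne : z ^ ((s : ℂ) + 1) ≠ 0 := by
      intro h
      rw [Complex.cpow_eq_zero_iff] at h
      rw [h.1] at hz'
      simp at hz'
    exact ((differentiableAt_const _).div
      (differentiableAt_id.cpow (differentiableAt_const _) hslit) hzne).differentiableWithinAt
  have hUconn : IsPreconnected U := (convex_halfSpace_re_gt (0 : ℝ)).isPreconnected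
  have h1U : (1 : ℂ) ∈ U := by simp [U]
  have hfreq : ∃ᶠ z in nhdsWithin (1 : ℂ) {(1 : ℂ)}ᶜ, f z = g z := by
    have htend : Filter.Tendsto (fun n : ℕ => ((1 + ((n : ℝ) + 1)⁻¹ : ℝ) : ℂ)) Filter.atTop
        (nhdsWithin (1 : ℂ) {(1 : ℂ)}ᶜ) := by
      rw [tendsto_nhdsWithin_iff]
      constructor
      · have : Filter.Tendsto (fun n : ℕ => (1 + ((n : ℝ) + 1)⁻¹ : ℝ)) Filter.atTop (nhds 1) := by
          have := tendsto_one_div_add_atTop_nhds_zero_nat (𝕜 := ℝ)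
          simp only [one_div] at this
          simpa using Filter.Tendsto.const_add (1 : ℝ) this
        have := (Complex.continuous_ofReal.tendsto (1 : ℝ)).comp this
        simpa [Function.comp_def] using this
      · refine Filter.Eventually.of_forall fun n => ?_
        simp only [Set.mem_compl_iff, Set.mem_singleton_iff]
        intro h
        have : (1 + ((n : ℝ) + 1)⁻¹ : ℝ) = 1 := by exact_mod_cast h
        have hpos : (0 : ℝ) < ((n : ℝ) + 1)⁻¹ := by positivity
        linarith
    refine htend.frequently (Filter.Frequently.of_forall fun n => ?_)
    have hxpos : (0 : ℝ) < 1 + ((n : ℝ) + 1)⁻¹ := by positivity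
    exact key_real s hs hxpos
  have := hfa.eqOn_of_preconnected_of_frequently_eq hga hUconn h1U hfreq
  exact this hμ

end Stmt1Aux

open Stmt1Aux

/-- For every real `s > 0` and every `ζ ∈ (0, e)`, there exists `M > 0` such that for every
complex `μ` with `Re μ ≥ M` one has
`‖∫_{0}^{ζ} r^s e^{−μ r} dr − Γ(s+1)/μ^{s+1}‖ ≤ (2 / Re μ) · e^{−(ζ/2)·Re μ}`. -/
theorem stmt_1 (s : ℝ) (hs : 0 < s) (ζ : ℝ) (hζ : ζ ∈ Set.Ioo (0 : ℝ) (Real.exp 1)) :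
    ∃ M : ℝ, 0 < M ∧ ∀ μ : ℂ, M ≤ μ.re →
      ‖(∫ r in (0:ℝ)..ζ, ((r ^ s : ℝ) : ℂ) * Complex.exp (-μ * r)) -
          (Real.Gamma (s + 1) : ℂ) / μ ^ ((s : ℂ) + 1)‖ ≤
        (2 / μ.re) * Real.exp (-(ζ / 2) * μ.re) := by
  obtain ⟨hζ0, hζe⟩ := hζ
  refine ⟨2 * s, by positivity, fun μ hμ => ?_⟩
  set x : ℝ := μ.re with hx
  have hx0 : 0 < x := by nlinarith
  have hxs : s < x := by nlinarith
  have hb0 : 0 < x - s := by linarith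
  -- split the full integral
  have hint : IntegrableOn (fun t : ℝ => ((t ^ s : ℝ) : ℂ) * Complex.exp (-μ * t)) (Ioi 0) :=
    integrable_complex s hs hx0
  have hioc : IntegrableOn (fun t : ℝ => ((t ^ s : ℝ) : ℂ) * Complex.exp (-μ * t)) (Ioc 0 ζ) :=
    hint.mono_set Ioc_subset_Ioi_self
  have hioi : IntegrableOn (fun t : ℝ => ((t ^ s : ℝ) : ℂ) * Complex.exp (-μ * t)) (Ioi ζ) :=
    hint.mono_set (Ioi_subset_Ioi hζ0.le)
  have hsplit : (∫ t in Ioc (0 : ℝ) ζ, ((t ^ s : ℝ) : ℂ) * Complex.exp (-μ * t)) +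
      (∫ t in Ioi ζ, ((t ^ s : ℝ) : ℂ) * Complex.exp (-μ * t)) =
      ∫ t in Ioi (0 : ℝ), ((t ^ s : ℝ) : ℂ) * Complex.exp (-μ * t) := by
    rw [← setIntegral_union (Ioc_disjoint_Ioi le_rfl) measurableSet_Ioi hioc hioi,
      Ioc_union_Ioi_eq_Ioi hζ0.le]
  have hkey := key s hs hx0
  have hinterval : (∫ r in (0:ℝ)..ζ, ((r ^ s : ℝ) : ℂ) * Complex.exp (-μ * r)) =
      ∫ t in Ioc (0 : ℝ) ζ, ((t ^ s : ℝ) : ℂ) * Complex.exp (-μ * t) :=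
    intervalIntegral.integral_of_le hζ0.le
  have hdiff : (∫ r in (0:ℝ)..ζ, ((r ^ s : ℝ) : ℂ) * Complex.exp (-μ * r)) -
      (Real.Gamma (s + 1) : ℂ) / μ ^ ((s : ℂ) + 1) =
      -(∫ t in Ioi ζ, ((t ^ s : ℝ) : ℂ) * Complex.exp (-μ * t)) := by
    rw [hinterval, ← hkey, ← hsplit]
    ring
  rw [hdiff, norm_neg]
  -- bound the tail integral
  have hbound : ‖∫ t in Ioi ζ, ((t ^ s : ℝ) : ℂ) * Complex.exp (-μ * t)‖ ≤
      ∫ t in Ioi ζ, Real.exp (-(x - s) * t) := by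
    refine norm_integral_le_of_norm_le (exp_neg_integrableOn_Ioi ζ hb0) ?_
    filter_upwards [ae_restrict_mem measurableSet_Ioi] with t ht
    have ht0 : 0 < t := lt_trans hζ0 ht
    rw [norm_integrand ht0.le μ]
    have hts : t ^ s ≤ Real.exp (s * t) := by
      rw [Real.rpow_def_of_pos ht0]
      apply Real.exp_le_exp.mpr
      have hlog : Real.log t ≤ t := (Real.log_le_sub_one_of_pos ht0).trans (by linarith)
      nlinarith
    calc t ^ s * Real.exp (-μ.re * t) ≤ Real.exp (s * t) * Real.exp (-μ.re * t) :=
          mul_le_mul_of_nonneg_right hts (Real.exp_nonneg _)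
      _ = Real.exp (-(x - s) * t) := by rw [← Real.exp_add, hx]; ring_nf
  have hval : (∫ t in Ioi ζ, Real.exp (-(x - s) * t)) = (x - s)⁻¹ * Real.exp (-((x - s) * ζ)) := by
    have h := integral_comp_mul_left_Ioi (fun u : ℝ => Real.exp (-u)) ζ hb0
    simp only [smul_eq_mul] at h
    calc (∫ t in Ioi ζ, Real.exp (-(x - s) * t))
        = ∫ t in Ioi ζ, Real.exp (-((x - s) * t)) := by simp only [neg_mul]
      _ = (x - s)⁻¹ * ∫ u in Ioi ((x - s) * ζ), Real.exp (-u) := h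
      _ = (x - s)⁻¹ * Real.exp (-((x - s) * ζ)) := by rw [integral_exp_neg_Ioi]
  have hfinal : (x - s)⁻¹ * Real.exp (-((x - s) * ζ)) ≤ (2 / x) * Real.exp (-(ζ / 2) * x) := by
    have h1 : (x - s)⁻¹ ≤ 2 / x := by
      have h1a : (x - s)⁻¹ ≤ (x / 2)⁻¹ := by
        apply inv_anti₀ (by positivity) (by linarith)
      calc (x - s)⁻¹ ≤ (x / 2)⁻¹ := h1a
        _ = 2 / x := by rw [inv_div]
    have h2 : Real.exp (-((x - s) * ζ)) ≤ Real.exp (-(ζ / 2) * x) := by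
      apply Real.exp_le_exp.mpr
      nlinarith
    apply mul_le_mul h1 h2 (Real.exp_nonneg _)
    positivity
  calc ‖∫ t in Ioi ζ, ((t ^ s : ℝ) : ℂ) * Complex.exp (-μ * t)‖
      ≤ ∫ t in Ioi ζ, Real.exp (-(x - s) * t) := hbound
    _ = (x - s)⁻¹ * Real.exp (-((x - s) * ζ)) := hval
    _ ≤ (2 / x) * Real.exp (-(ζ / 2) * x) := hfinal
end

section
/- Let θ_m < θ_M be real numbers with β := θ_M − θ_m ∈ (0, π) and β/π irrational, let ℓ be a natural number, and let a, b ∈ ℂ. If a(e^{−iθ_m} + e^{−iθ_M}) + b(e^{−(2ℓ+3)iθ_m} + e^{−(2ℓ+3)iθ_M}) = 0 and a(e^{(2ℓ+3)iθ_m} + e^{(2ℓ+3)iθ_M}) + b(e^{iθ_m} + e^{iθ_M}) = 0, then a = 0 and b = 0. -/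
open Complex in
lemma aux_prod (x y : ℝ) :
    (Complex.exp (-(x:ℂ) * I) + Complex.exp (-(y:ℂ) * I)) *
      (Complex.exp ((x:ℂ) * I) + Complex.exp ((y:ℂ) * I)) =
    2 + 2 * ((Real.cos (y - x) : ℝ) : ℂ) := by
  have h1 : (-(x:ℂ)) * I + (x:ℂ) * I = 0 := by ring
  have h2 : (-(x:ℂ)) * I + (y:ℂ) * I = ((y - x : ℝ) : ℂ) * I := by push_cast; ring
  have h3 : (-(y:ℂ)) * I + (x:ℂ) * I = (-((y - x : ℝ) : ℂ)) * I := by push_cast; ring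
  have h4 : (-(y:ℂ)) * I + (y:ℂ) * I = 0 := by ring
  have hc : Complex.exp (((y - x : ℝ) : ℂ) * I) + Complex.exp ((-((y - x : ℝ) : ℂ)) * I)
      = 2 * ((Real.cos (y - x) : ℝ) : ℂ) := by
    rw [Complex.exp_mul_I, Complex.exp_mul_I, Complex.cos_neg, Complex.sin_neg,
      Complex.ofReal_cos]
    ring
  calc (Complex.exp (-(x:ℂ) * I) + Complex.exp (-(y:ℂ) * I)) *
      (Complex.exp ((x:ℂ) * I) + Complex.exp ((y:ℂ) * I))
      = Complex.exp ((-(x:ℂ)) * I + (x:ℂ) * I) + Complex.exp ((-(x:ℂ)) * I + (y:ℂ) * I)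
        + (Complex.exp ((-(y:ℂ)) * I + (x:ℂ) * I) + Complex.exp ((-(y:ℂ)) * I + (y:ℂ) * I)) := by
        simp only [Complex.exp_add]; ring
    _ = 2 + 2 * ((Real.cos (y - x) : ℝ) : ℂ) := by
        rw [h1, h2, h3, h4, Complex.exp_zero]
        linear_combination hc

/-- If `θ_m < θ_M`, `β = θ_M − θ_m ∈ (0, π)` with `β/π` irrational, and `a, b ∈ ℂ` satisfy
the two linear relations below, then `a = b = 0`. -/
theorem stmt_7 (θm θM : ℝ) (h2 : θm < θM) (h4 : θM - θm < Real.pi)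
    (hirr : Irrational ((θM - θm) / Real.pi)) (ℓ : ℕ) (a b : ℂ)
    (heq1 : a * (Complex.exp (-(θm : ℂ) * Complex.I) + Complex.exp (-(θM : ℂ) * Complex.I)) +
        b * (Complex.exp (-((2 * ℓ + 3 : ℕ) : ℂ) * θm * Complex.I) +
          Complex.exp (-((2 * ℓ + 3 : ℕ) : ℂ) * θM * Complex.I)) = 0)
    (heq2 : a * (Complex.exp (((2 * ℓ + 3 : ℕ) : ℂ) * θm * Complex.I) +
          Complex.exp (((2 * ℓ + 3 : ℕ) : ℂ) * θM * Complex.I)) +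
        b * (Complex.exp ((θm : ℂ) * Complex.I) + Complex.exp ((θM : ℂ) * Complex.I)) = 0) :
    a = 0 ∧ b = 0 := by
  set N : ℕ := 2 * ℓ + 3 with hN
  set β : ℝ := θM - θm with hβ
  have hpi : Real.pi ≠ 0 := Real.pi_ne_zero
  -- cos β ≠ cos (N β)
  have hcos : Real.cos β ≠ Real.cos ((N : ℝ) * β) := by
    intro h
    rcases Real.cos_eq_cos_iff.1 h with ⟨k, hk | hk⟩
    · refine hirr ⟨2 * (k:ℚ) / ((N:ℚ) - 1), ?_⟩
      have hN1 : ((N : ℝ) - 1) ≠ 0 := by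
        have : (3:ℝ) ≤ (N : ℝ) := by exact_mod_cast by omega
        linarith
      have hcast : ((2 * (k:ℚ) / ((N:ℚ) - 1) : ℚ) : ℝ) = 2 * (k:ℝ) / ((N:ℝ) - 1) := by
        push_cast; ring
      rw [hcast, div_eq_div_iff hN1 hpi]
      linear_combination -hk
    · refine hirr ⟨2 * (k:ℚ) / ((N:ℚ) + 1), ?_⟩
      have hN1 : ((N : ℝ) + 1) ≠ 0 := by positivity
      have hcast : ((2 * (k:ℚ) / ((N:ℚ) + 1) : ℚ) : ℝ) = 2 * (k:ℝ) / ((N:ℝ) + 1) := by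
        push_cast; ring
      rw [hcast, div_eq_div_iff hN1 hpi]
      linear_combination -hk
  -- products
  have hA := aux_prod θm θM
  rw [← hβ] at hA
  have hB := aux_prod ((N:ℝ) * θm) ((N:ℝ) * θM)
  have hcast1 : (((N:ℝ) * θm : ℝ) : ℂ) = ((N : ℕ) : ℂ) * (θm : ℂ) := by push_cast; ring
  have hcast2 : (((N:ℝ) * θM : ℝ) : ℂ) = ((N : ℕ) : ℂ) * (θM : ℂ) := by push_cast; ring
  have hcast3 : (N:ℝ) * θM - (N:ℝ) * θm = (N:ℝ) * β := by rw [hβ]; ring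
  rw [hcast1, hcast2, hcast3] at hB
  have hB' : (Complex.exp (-((N : ℕ) : ℂ) * θm * Complex.I) +
        Complex.exp (-((N : ℕ) : ℂ) * θM * Complex.I)) *
      (Complex.exp (((N : ℕ) : ℂ) * θm * Complex.I) +
        Complex.exp (((N : ℕ) : ℂ) * θM * Complex.I)) =
      2 + 2 * ((Real.cos ((N:ℝ) * β) : ℝ) : ℂ) := by
    rw [← hB]; ring_nf
  have hD : ((2:ℂ) + 2 * ((Real.cos β : ℝ) : ℂ)) -
      ((2:ℂ) + 2 * ((Real.cos ((N:ℝ) * β) : ℝ) : ℂ)) ≠ 0 := by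
    intro h
    apply hcos
    have h' : ((Real.cos β : ℝ) : ℂ) = ((Real.cos ((N:ℝ) * β) : ℝ) : ℂ) := by
      linear_combination h / 2
    exact_mod_cast h'
  have ha0 : a * (((2:ℂ) + 2 * ((Real.cos β : ℝ) : ℂ)) -
      ((2:ℂ) + 2 * ((Real.cos ((N:ℝ) * β) : ℝ) : ℂ))) = 0 := by
    linear_combination (Complex.exp ((θm:ℂ) * Complex.I) + Complex.exp ((θM:ℂ) * Complex.I)) * heq1
      - (Complex.exp (-((N : ℕ) : ℂ) * θm * Complex.I) +
          Complex.exp (-((N : ℕ) : ℂ) * θM * Complex.I)) * heq2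
      - a * hA + a * hB'
  have hb0 : b * (((2:ℂ) + 2 * ((Real.cos β : ℝ) : ℂ)) -
      ((2:ℂ) + 2 * ((Real.cos ((N:ℝ) * β) : ℝ) : ℂ))) = 0 := by
    linear_combination (Complex.exp (-(θm:ℂ) * Complex.I) + Complex.exp (-(θM:ℂ) * Complex.I)) * heq2
      - (Complex.exp (((N : ℕ) : ℂ) * θm * Complex.I) +
          Complex.exp (((N : ℕ) : ℂ) * θM * Complex.I)) * heq1
      - b * hA + b * hB'
  exact ⟨(mul_eq_zero.1 ha0).resolve_right hD, (mul_eq_zero.1 hb0).resolve_right hD⟩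
end

section
/- Let −π < θ_m < θ_M < π with θ_M − θ_m ∈ (0, π) and θ_M − θ_m ≠ π/2. Then cos(θ_M)·e^{−2iθ_m} + cos(θ_m)·e^{−2iθ_M} ≠ 0. -/
open Real

lemma cos_zero_interval {x : ℝ} (hx : -π < x) (hx' : x < π) (h : Real.cos x = 0) :
    x = π / 2 ∨ x = -(π / 2) := by
  obtain ⟨k, hk⟩ := Real.cos_eq_zero_iff.mp h
  have hπ := Real.pi_pos
  have hk1 : (-2 : ℝ) < 2 * k + 1 := by nlinarith [hx, hk]
  have hk2 : (2 * k + 1 : ℝ) < 2 := by nlinarith [hx', hk]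
  have : k = 0 ∨ k = -1 := by
    have h1 : (-2 : ℤ) < 2 * k + 1 := by exact_mod_cast hk1
    have h2 : (2 * k + 1 : ℤ) < 2 := by exact_mod_cast hk2
    omega
  rcases this with rfl | rfl
  · left; rw [hk]; push_cast; ring
  · right; rw [hk]; push_cast; ring

/-- If `−π < θ_m < θ_M < π`, `θ_M − θ_m ∈ (0, π)` and `θ_M − θ_m ≠ π/2`, then
`cos(θ_M)·e^{−2iθ_m} + cos(θ_m)·e^{−2iθ_M} ≠ 0`. -/
theorem stmt_9 (θm θM : ℝ) (h1 : -Real.pi < θm) (h2 : θm < θM) (h3 : θM < Real.pi)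
    (h4 : θM - θm < Real.pi) (h5 : θM - θm ≠ Real.pi / 2) :
    (Real.cos θM : ℂ) * Complex.exp (-2 * (θm : ℂ) * Complex.I) +
      (Real.cos θm : ℂ) * Complex.exp (-2 * (θM : ℂ) * Complex.I) ≠ 0 := by
  intro h
  set δ : ℝ := θM - θm with hδ
  have hδ0 : 0 < δ := by simp only [hδ]; linarith
  have hδπ : δ < π := h4
  have e1 : Complex.exp (-2 * (θm : ℂ) * Complex.I) * Complex.exp (((θm + θM : ℝ) : ℂ) * Complex.I)
      = Complex.exp ((δ : ℂ) * Complex.I) := by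
    rw [← Complex.exp_add]; congr 1; push_cast [hδ]; ring
  have e2 : Complex.exp (-2 * (θM : ℂ) * Complex.I) * Complex.exp (((θm + θM : ℝ) : ℂ) * Complex.I)
      = Complex.exp (-(δ : ℂ) * Complex.I) := by
    rw [← Complex.exp_add]; congr 1; push_cast [hδ]; ring
  have h' := congrArg (· * Complex.exp (((θm + θM : ℝ) : ℂ) * Complex.I)) h
  simp only [zero_mul] at h'
  have key : (Real.cos θM : ℂ) * Complex.exp ((δ : ℂ) * Complex.I) +
      (Real.cos θm : ℂ) * Complex.exp (-(δ : ℂ) * Complex.I) = 0 := by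
    linear_combination h' - (Real.cos θM : ℂ) * e1 - (Real.cos θm : ℂ) * e2
  rw [Complex.exp_mul_I, Complex.exp_mul_I, Complex.cos_neg, Complex.sin_neg] at key
  rw [Complex.ext_iff] at key
  simp [Complex.add_re, Complex.add_im, Complex.mul_re, Complex.mul_im,
    Complex.cos_ofReal_re, Complex.sin_ofReal_re, Complex.cos_ofReal_im,
    Complex.sin_ofReal_im] at key
  obtain ⟨hre, him⟩ := key
  have hs : 0 < Real.sin δ := Real.sin_pos_of_pos_of_lt_pi hδ0 hδπ
  have hab : Real.cos θM = Real.cos θm := by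
    have hms : (Real.cos θM - Real.cos θm) * Real.sin δ = 0 := by linarith
    rcases mul_eq_zero.mp hms with h' | h'
    · linarith
    · linarith
  have hc : Real.cos δ ≠ 0 := by
    intro hc0
    rcases cos_zero_interval (by linarith) hδπ hc0 with h' | h'
    · exact h5 h'
    · linarith [Real.pi_pos]
  have ha : Real.cos θm = 0 := by
    have : Real.cos θm * Real.cos δ = 0 := by rw [hab] at hre; linarith
    exact (mul_eq_zero.mp this).resolve_right hc
  have hb : Real.cos θM = 0 := by rw [hab, ha]
  rw [hδ] at h4 h5
  rcases cos_zero_interval h1 (by linarith) ha with hm | hm <;>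
  rcases cos_zero_interval (by linarith) h3 hb with hM | hM <;>
  rw [hm, hM] at h2 h4 <;> linarith [Real.pi_pos]
end

section
/- Let −π < θ_m < θ_M < π with θ_M − θ_m ∈ (0, π) and θ_M − θ_m ≠ π/2. Then sin(θ_M)·e^{−2iθ_m} + sin(θ_m)·e^{−2iθ_M} ≠ 0. -/
/-- If `−π < θ_m < θ_M < π`, `θ_M − θ_m ∈ (0, π)` and `θ_M − θ_m ≠ π/2`, then
`sin(θ_M)·e^{−2iθ_m} + sin(θ_m)·e^{−2iθ_M} ≠ 0`. -/
theorem stmt_10 (θm θM : ℝ) (h1 : -Real.pi < θm) (h2 : θm < θM) (h3 : θM < Real.pi)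
    (h4 : θM - θm < Real.pi) (h5 : θM - θm ≠ Real.pi / 2) :
    (Real.sin θM : ℂ) * Complex.exp (-2 * (θm : ℂ) * Complex.I) +
      (Real.sin θm : ℂ) * Complex.exp (-2 * (θM : ℂ) * Complex.I) ≠ 0 := by
  set δ := θM - θm with hδ
  have hδ0 : 0 < δ := by simp [hδ]; linarith
  have e1 : Complex.exp (-2 * (θm : ℂ) * Complex.I)
      = Complex.exp ((δ : ℂ) * Complex.I) * Complex.exp (-((θm : ℂ) + θM) * Complex.I) := by
    rw [← Complex.exp_add]; congr 1; push_cast [hδ]; ring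
  have e2 : Complex.exp (-2 * (θM : ℂ) * Complex.I)
      = Complex.exp ((-δ : ℝ) * Complex.I) * Complex.exp (-((θm : ℂ) + θM) * Complex.I) := by
    rw [← Complex.exp_add]; congr 1; push_cast [hδ]; ring
  have c1 : Complex.exp ((δ : ℂ) * Complex.I)
      = (Real.cos δ : ℂ) + (Real.sin δ : ℂ) * Complex.I := by
    rw [Complex.exp_mul_I, Complex.ofReal_cos, Complex.ofReal_sin]
  have c2 : Complex.exp ((-δ : ℝ) * Complex.I)
      = (Real.cos δ : ℂ) - (Real.sin δ : ℂ) * Complex.I := by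
    rw [Complex.exp_mul_I, Complex.ofReal_cos, Complex.ofReal_sin]
    push_cast
    rw [Complex.cos_neg, Complex.sin_neg]; ring
  intro hz
  have hw : (((Real.sin θM + Real.sin θm) * Real.cos δ : ℝ) : ℂ)
      + (((Real.sin θM - Real.sin θm) * Real.sin δ : ℝ) : ℂ) * Complex.I = 0 := by
    have : ((((Real.sin θM + Real.sin θm) * Real.cos δ : ℝ) : ℂ)
        + (((Real.sin θM - Real.sin θm) * Real.sin δ : ℝ) : ℂ) * Complex.I)
        * Complex.exp (-((θm : ℂ) + θM) * Complex.I) = 0 := by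
      rw [← hz, e1, e2, c1, c2]; push_cast; ring
    rcases mul_eq_zero.1 this with h | h
    · exact h
    · exact absurd h (Complex.exp_ne_zero _)
  have hre : (Real.sin θM + Real.sin θm) * Real.cos δ = 0 := by
    have := congrArg Complex.re hw; simpa [-Complex.ofReal_sin, -Complex.ofReal_cos] using this
  have him : (Real.sin θM - Real.sin θm) * Real.sin δ = 0 := by
    have := congrArg Complex.im hw; simpa [-Complex.ofReal_sin, -Complex.ofReal_cos] using this
  have hsin : 0 < Real.sin δ := Real.sin_pos_of_pos_of_lt_pi hδ0 h4
  have hhalf : 0 < Real.sin (δ / 2) := Real.sin_pos_of_pos_of_lt_pi (by linarith)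
    (by linarith [Real.pi_pos])
  have hchalf : 0 < Real.cos (δ / 2) := Real.cos_pos_of_mem_Ioo
    ⟨by linarith [Real.pi_pos], by linarith⟩
  have hsub : Real.sin θM - Real.sin θm
      = 2 * Real.sin (δ / 2) * Real.cos ((θM + θm) / 2) := by
    rw [hδ, Real.sin_sub_sin]
  have hadd : Real.sin θM + Real.sin θm
      = 2 * Real.sin ((θM + θm) / 2) * Real.cos (δ / 2) := by
    have h := Real.sin_sub_sin θM (-θm)
    simp only [Real.sin_neg, sub_neg_eq_add] at h
    rw [hδ, h]; ring_nf
  -- from him: cos ((θM+θm)/2) = 0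
  have hcosσ : Real.cos ((θM + θm) / 2) = 0 := by
    rcases mul_eq_zero.1 him with h | h
    · rw [hsub] at h
      rcases mul_eq_zero.1 h with h' | h'
      · rcases mul_eq_zero.1 h' with h'' | h''
        · norm_num at h''
        · linarith
      · exact h'
    · linarith
  have hsinσ : Real.sin ((θM + θm) / 2) ≠ 0 := by
    intro h
    have := Real.sin_sq_add_cos_sq ((θM + θm) / 2)
    rw [h, hcosσ] at this; norm_num at this
  have hcosδ : Real.cos δ = 0 := by
    rcases mul_eq_zero.1 hre with h | h
    · rw [hadd] at h
      rcases mul_eq_zero.1 h with h' | h'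
      · rcases mul_eq_zero.1 h' with h'' | h''
        · norm_num at h''
        · exact absurd h'' hsinσ
      · linarith
    · exact h
  -- cos δ = 0 with 0 < δ < π forces δ = π/2
  rcases Real.cos_eq_zero_iff.1 hcosδ with ⟨n, hn⟩
  have hn0 : n = 0 := by
    have hπ := Real.pi_pos
    have a : (n : ℝ) < 1 := by nlinarith
    have b : (-1 : ℝ) < (n : ℝ) := by nlinarith
    have a' : n < 1 := by exact_mod_cast a
    have b' : -1 < n := by exact_mod_cast b
    omega
  rw [hn0] at hn
  simp at hn
  exact h5 (by linarith)
end

section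
/- Let θ_m < θ_M be real numbers with θ_M − θ_m ∈ (0, π) and θ_M − θ_m ≠ π/2, and let c₁, c₂ ∈ ℂ. If (c₁ cos θ_M + c₂ sin θ_M)e^{2iθ_m} + (c₁ cos θ_m + c₂ sin θ_m)e^{2iθ_M} = 0 and (c₁ cos θ_M + c₂ sin θ_M)e^{−2iθ_m} + (c₁ cos θ_m + c₂ sin θ_m)e^{−2iθ_M} = 0, then c₁ = 0 and c₂ = 0. -/
/-- If `θ_m < θ_M`, `θ_M − θ_m ∈ (0, π) \ {π/2}`, and `c₁, c₂ ∈ ℂ` satisfy the two vanishing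
relations `𝒩 = 0` for both choices of the auxiliary direction, then `c₁ = c₂ = 0`. -/
theorem stmt_12 (θm θM : ℝ) (h2 : θm < θM) (h4 : θM - θm < Real.pi)
    (h5 : θM - θm ≠ Real.pi / 2) (c₁ c₂ : ℂ)
    (heq1 : (c₁ * (Real.cos θM : ℂ) + c₂ * (Real.sin θM : ℂ)) *
          Complex.exp (2 * (θm : ℂ) * Complex.I) +
        (c₁ * (Real.cos θm : ℂ) + c₂ * (Real.sin θm : ℂ)) *
          Complex.exp (2 * (θM : ℂ) * Complex.I) = 0)
    (heq2 : (c₁ * (Real.cos θM : ℂ) + c₂ * (Real.sin θM : ℂ)) *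
          Complex.exp (-2 * (θm : ℂ) * Complex.I) +
        (c₁ * (Real.cos θm : ℂ) + c₂ * (Real.sin θm : ℂ)) *
          Complex.exp (-2 * (θM : ℂ) * Complex.I) = 0) :
    c₁ = 0 ∧ c₂ = 0 := by
  set A : ℂ := c₁ * (Real.cos θM : ℂ) + c₂ * (Real.sin θM : ℂ) with hA
  set B : ℂ := c₁ * (Real.cos θm : ℂ) + c₂ * (Real.sin θm : ℂ) with hB
  set E : ℂ := Complex.exp ((2 * ((θM : ℂ) - (θm : ℂ))) * Complex.I) with hE
  have h1 : A + B * E = 0 := by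
    have hx : Complex.exp (2*(θM:ℂ)*Complex.I) = E * Complex.exp (2*(θm:ℂ)*Complex.I) := by
      rw [hE, ← Complex.exp_add]; congr 1; ring
    rw [hx] at heq1
    have h : (A + B * E) * Complex.exp (2*(θm:ℂ)*Complex.I) = 0 := by linear_combination heq1
    rcases mul_eq_zero.mp h with h | h
    · exact h
    · exact absurd h (Complex.exp_ne_zero _)
  have h2' : A * E + B = 0 := by
    have hx : Complex.exp (-2*(θm:ℂ)*Complex.I) = E * Complex.exp (-2*(θM:ℂ)*Complex.I) := by
      rw [hE, ← Complex.exp_add]; congr 1; ring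
    rw [hx] at heq2
    have h : (A * E + B) * Complex.exp (-2*(θM:ℂ)*Complex.I) = 0 := by linear_combination heq2
    rcases mul_eq_zero.mp h with h | h
    · exact h
    · exact absurd h (Complex.exp_ne_zero _)
  have hBz : B * (1 - E * E) = 0 := by linear_combination h2' - E * h1
  have hEne : E * E ≠ 1 := by
    intro hcontra
    rw [hE, ← Complex.exp_add, Complex.exp_eq_one_iff] at hcontra
    obtain ⟨n, hn⟩ := hcontra
    have hre : 4 * (θM - θm) = (n : ℝ) * (2 * Real.pi) := by
      have := congrArg Complex.im hn
      simp at this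
      linarith
    have hpi := Real.pi_pos
    have hn0 : 0 < (n:ℝ) := by nlinarith
    have hn2 : (n:ℝ) < 2 := by nlinarith
    have hn1 : n = 1 := by
      have ha : 0 < n := by exact_mod_cast hn0
      have hb : n < 2 := by exact_mod_cast hn2
      omega
    apply h5
    rw [hn1] at hre
    push_cast at hre
    linarith
  have hB0 : B = 0 := by
    rcases mul_eq_zero.mp hBz with h | h
    · exact h
    · exact absurd (by linear_combination -h : E * E = 1) hEne
  have hA0 : A = 0 := by
    have h : A * E = 0 := by linear_combination h2' - hB0
    rcases mul_eq_zero.mp h with h | h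
    · exact h
    · exact absurd h (Complex.exp_ne_zero _)
  have hsin : Real.sin (θM - θm) ≠ 0 :=
    ne_of_gt (Real.sin_pos_of_pos_of_lt_pi (by linarith) h4)
  have hsinC : (Real.sin (θM - θm) : ℂ) ≠ 0 := by exact_mod_cast hsin
  have hss : (Real.sin (θM - θm) : ℂ) =
      (Real.sin θM : ℂ) * (Real.cos θm : ℂ) - (Real.cos θM : ℂ) * (Real.sin θm : ℂ) := by
    push_cast [Real.sin_sub]
    ring
  have hc1 : c₁ * (Real.sin (θM - θm) : ℂ) = 0 := by
    rw [hss]; linear_combination (Real.sin θM : ℂ) * hB0 - (Real.sin θm : ℂ) * hA0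
  have hc2 : c₂ * (Real.sin (θM - θm) : ℂ) = 0 := by
    rw [hss]; linear_combination (Real.cos θm : ℂ) * hA0 - (Real.cos θM : ℂ) * hB0
  exact ⟨(mul_eq_zero.mp hc1).resolve_right hsinC, (mul_eq_zero.mp hc2).resolve_right hsinC⟩
end

section
/- Let −π ≤ θ_m < θ_M < π, let φ ∈ ℝ, let r₀ > 0, and suppose there exists ς > 0 such that cos(θ − φ) ≥ ς for every θ ∈ [θ_m, θ_M]. Then the limit as τ → ∞ (over real τ) of τ³ · ∫_{θ_m}^{θ_M} ∫_{0}^{r₀} r² cos θ · e^{−τ e^{i(θ−φ)} r} dr dθ equals 2 e^{3iφ} · ∫_{θ_m}^{θ_M} cos θ · e^{−3iθ} dθ. -/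
open MeasureTheory Filter

lemma aux_int (a : ℂ) (ha : a ≠ 0) (r₀ : ℝ) :
    (∫ r in (0:ℝ)..r₀, (r:ℂ)^2 * Complex.exp (-(a * r)))
      = (2 - Complex.exp (-(a * r₀)) * (a^2*r₀^2 + 2*(a*r₀) + 2)) / a^3 := by
  have hder : ∀ z : ℂ, HasDerivAt
      (fun z : ℂ => -(Complex.exp (-(a*z)) * (a^2*z^2 + 2*(a*z) + 2)) / a^3)
      (z^2 * Complex.exp (-(a*z))) z := by
    intro z
    have h1 : HasDerivAt (fun z : ℂ => -(a*z)) (-a) z := by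
      simpa using (hasDerivAt_id z).const_mul (-a)
    have h2 := h1.cexp
    have h3 : HasDerivAt (fun z : ℂ => a^2*z^2 + 2*(a*z) + 2) (a^2*(2*z) + 2*a) z := by
      have p1 : HasDerivAt (fun z : ℂ => a^2*z^2) (a^2*(2*z)) z := by
        simpa using ((hasDerivAt_pow 2 z).const_mul (a^2))
      have p2 : HasDerivAt (fun z : ℂ => 2*(a*z)) (2*a) z := by
        simpa [mul_assoc] using (((hasDerivAt_id z).const_mul a).const_mul 2)
      simpa using (p1.add p2).add_const 2
    have := ((h2.mul h3).neg).div_const (a^3)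
    refine this.congr_deriv ?_
    rw [div_eq_iff (pow_ne_zero 3 ha)]
    ring
  have hcont : Continuous fun r : ℝ => (r:ℂ)^2 * Complex.exp (-(a*r)) := by
    fun_prop
  have key := intervalIntegral.integral_eq_sub_of_hasDerivAt
    (f := fun r : ℝ => -(Complex.exp (-(a*r)) * (a^2*(r:ℂ)^2 + 2*(a*r) + 2)) / a^3)
    (fun r _ => ((hder r).comp_ofReal)) (hcont.intervalIntegrable 0 r₀)
  rw [key]
  push_cast
  simp [Complex.exp_zero]
  ring

lemma pm_tendsto (c : ℝ) (hc : 0 < c) (n : ℕ) :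
    Tendsto (fun τ : ℝ => τ^n * Real.exp (-(c*τ))) atTop (nhds 0) := by
  have hcomp : Tendsto (fun τ : ℝ => c * τ) atTop atTop :=
    Tendsto.const_mul_atTop hc tendsto_id
  have h := (Real.tendsto_pow_mul_exp_neg_atTop_nhds_zero n).comp hcomp
  have h2 := h.const_mul ((c:ℝ)^n)⁻¹
  rw [mul_zero] at h2
  refine h2.congr fun τ => ?_
  simp only [Function.comp]
  rw [mul_pow]
  field_simp

lemma alg_id (u v c W : ℂ) (hu : u ≠ 0) (hv : v ≠ 0) :
    u^3 * (c * ((2 - W)/(u*v)^3)) = 2*c*(v^3)⁻¹ - c*(v^3)⁻¹*W := by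
  field_simp

/-- Leading-order asymptotics of the sector integral
`τ³ ∫_{θ_m}^{θ_M} ∫_0^{r₀} r² cos θ e^{−τ e^{i(θ−φ)} r} dr dθ → 2 e^{3iφ} ∫ cos θ e^{−3iθ} dθ`
as `τ → ∞`, under the direction condition `cos(θ − φ) ≥ ς > 0` on `[θ_m, θ_M]`. -/
theorem stmt_18 (θm θM φ r₀ : ℝ) (h1 : -Real.pi ≤ θm) (h2 : θm < θM) (h3 : θM < Real.pi)
    (hr : 0 < r₀) (ς : ℝ) (hς : 0 < ς)
    (hcos : ∀ θ ∈ Set.Icc θm θM, ς ≤ Real.cos (θ - φ)) :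
    Tendsto (fun τ : ℝ =>
        ((τ : ℂ)) ^ 3 *
          ∫ θ in θm..θM, ∫ r in (0:ℝ)..r₀,
            ((r ^ 2 * Real.cos θ : ℝ) : ℂ) *
              Complex.exp (-(τ : ℂ) * Complex.exp (((θ : ℂ) - (φ : ℂ)) * Complex.I) * (r : ℂ)))
      atTop
      (nhds (2 * Complex.exp (3 * (φ : ℂ) * Complex.I) *
        ∫ θ in θm..θM, (Real.cos θ : ℂ) * Complex.exp (-3 * (θ : ℂ) * Complex.I))) := by
  set z : ℝ → ℂ := fun θ => Complex.exp (((θ:ℂ) - (φ:ℂ)) * Complex.I) with hzdef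
  set e₃ : ℝ → ℂ := fun θ => Complex.exp (-(3*(((θ:ℂ) - (φ:ℂ)) * Complex.I))) with he₃def
  set E : ℝ → ℝ → ℂ := fun τ θ =>
    Complex.exp (-((τ:ℂ) * z θ * (r₀:ℂ))) *
      (((τ:ℂ)*z θ)^2*(r₀:ℂ)^2 + 2*((τ:ℂ)*z θ*(r₀:ℂ)) + 2) with hEdef
  have hz : ∀ θ : ℝ, z θ ≠ 0 := fun θ => Complex.exp_ne_zero _
  set L : ℂ := ∫ θ in θm..θM, 2*(Real.cos θ:ℂ)*e₃ θ with hLdef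
  set Err : ℝ → ℂ := fun τ => ∫ θ in θm..θM, (Real.cos θ:ℂ)*e₃ θ * E τ θ with hErrdef
  -- continuity facts
  have hcont1 : Continuous fun θ : ℝ => 2*(Real.cos θ:ℂ)*e₃ θ := by
    simp only [he₃def]; fun_prop
  have hcont2 : ∀ τ : ℝ, Continuous fun θ : ℝ => (Real.cos θ:ℂ)*e₃ θ * E τ θ := by
    intro τ; simp only [he₃def, hEdef, hzdef]; fun_prop
  -- Step A: eventual formula
  have heq : ∀ᶠ τ : ℝ in atTop,
      ((τ : ℂ)) ^ 3 *
          (∫ θ in θm..θM, ∫ r in (0:ℝ)..r₀,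
            ((r ^ 2 * Real.cos θ : ℝ) : ℂ) *
              Complex.exp (-(τ : ℂ) * Complex.exp (((θ : ℂ) - (φ : ℂ)) * Complex.I) * (r : ℂ)))
        = L - Err τ := by
    filter_upwards [eventually_gt_atTop (0:ℝ)] with τ hτ
    have hτc : (τ:ℂ) ≠ 0 := by exact_mod_cast hτ.ne'
    have hinner : ∀ θ : ℝ,
        (∫ r in (0:ℝ)..r₀, ((r ^ 2 * Real.cos θ : ℝ) : ℂ) *
            Complex.exp (-(τ : ℂ) * Complex.exp (((θ : ℂ) - (φ : ℂ)) * Complex.I) * (r : ℂ)))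
        = (Real.cos θ:ℂ) *
            ((2 - Complex.exp (-(((τ:ℂ)*z θ) * (r₀:ℂ))) *
              (((τ:ℂ)*z θ)^2*(r₀:ℂ)^2 + 2*(((τ:ℂ)*z θ)*(r₀:ℂ)) + 2)) / ((τ:ℂ)*z θ)^3) := by
      intro θ
      have ha : (τ:ℂ) * z θ ≠ 0 := mul_ne_zero hτc (hz θ)
      have hcongr : ∀ r : ℝ, ((r ^ 2 * Real.cos θ : ℝ) : ℂ) *
            Complex.exp (-(τ : ℂ) * Complex.exp (((θ : ℂ) - (φ : ℂ)) * Complex.I) * (r : ℂ))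
          = (Real.cos θ:ℂ) * ((r:ℂ)^2 * Complex.exp (-(((τ:ℂ)*z θ) * (r:ℂ)))) := by
        intro r
        simp only [hzdef]
        push_cast
        ring_nf
      rw [intervalIntegral.integral_congr (g := fun r : ℝ =>
            (Real.cos θ:ℂ) * ((r:ℂ)^2 * Complex.exp (-(((τ:ℂ)*z θ) * (r:ℂ)))))
          (fun r _ => hcongr r),
        intervalIntegral.integral_const_mul, aux_int _ ha r₀]
    rw [← intervalIntegral.integral_const_mul]
    have hEqOn : Set.EqOn
        (fun θ : ℝ => (τ:ℂ)^3 * ∫ r in (0:ℝ)..r₀,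
            ((r ^ 2 * Real.cos θ : ℝ) : ℂ) *
              Complex.exp (-(τ : ℂ) * Complex.exp (((θ : ℂ) - (φ : ℂ)) * Complex.I) * (r : ℂ)))
        (fun θ : ℝ => 2*(Real.cos θ:ℂ)*e₃ θ - (Real.cos θ:ℂ)*e₃ θ * E τ θ)
        (Set.uIcc θm θM) := by
      intro θ _
      simp only
      rw [hinner θ]
      have h1 : e₃ θ * (z θ)^3 = 1 := by
        simp only [he₃def, hzdef]
        rw [← Complex.exp_nat_mul, ← Complex.exp_add]
        norm_num
      have he3 : e₃ θ = ((z θ)^3)⁻¹ := eq_inv_of_mul_eq_one_left h1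
      rw [he3, hEdef]
      exact alg_id (τ:ℂ) (z θ) _ _ hτc (hz θ)
    rw [intervalIntegral.integral_congr hEqOn,
      intervalIntegral.integral_sub ((hcont1.intervalIntegrable _ _))
        ((hcont2 τ).intervalIntegrable _ _)]
  -- Step B: identify L
  have hL : L = 2 * Complex.exp (3 * (φ : ℂ) * Complex.I) *
      ∫ θ in θm..θM, (Real.cos θ : ℂ) * Complex.exp (-3 * (θ : ℂ) * Complex.I) := by
    rw [hLdef, ← intervalIntegral.integral_const_mul]
    apply intervalIntegral.integral_congr
    intro θ _
    simp only [he₃def]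
    rw [show -(3*(((θ:ℂ) - (φ:ℂ)) * Complex.I))
        = 3 * (φ:ℂ) * Complex.I + (-3 * (θ:ℂ) * Complex.I) by ring, Complex.exp_add]
    ring
  -- Step C: Err → 0
  have habs_z : ∀ θ : ℝ, ‖z θ‖ = 1 := by
    intro θ
    simp only [hzdef]
    simp [Complex.norm_exp, Complex.mul_re, Complex.sub_re, Complex.sub_im]
  have habs_e3 : ∀ θ : ℝ, ‖e₃ θ‖ = 1 := by
    intro θ
    simp only [he₃def]
    simp [Complex.norm_exp, Complex.mul_re, Complex.sub_re, Complex.sub_im]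
  have hbound : ∀ᶠ τ : ℝ in atTop, ‖Err τ‖ ≤
      (Real.exp (-(ς*r₀*τ)) * (τ^2*r₀^2 + 2*(τ*r₀) + 2)) * |θM - θm| := by
    filter_upwards [eventually_ge_atTop (0:ℝ)] with τ hτ
    apply intervalIntegral.norm_integral_le_of_norm_le_const
    intro θ hθ
    have hθ' : θ ∈ Set.Icc θm θM := by
      rw [Set.uIoc_of_le h2.le] at hθ
      exact Set.Ioc_subset_Icc_self hθ
    have hc := hcos θ hθ'
    have hzθ : z θ = Complex.exp (((θ - φ : ℝ) : ℂ) * Complex.I) := by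
      simp only [hzdef]
      rw [Complex.ofReal_sub]
    have habsE : ‖E τ θ‖ ≤ Real.exp (-(ς*r₀*τ)) * (τ^2*r₀^2 + 2*(τ*r₀) + 2) := by
      simp only [hEdef]
      rw [norm_mul]
      have hre : (-((τ:ℂ) * z θ * (r₀:ℂ))).re = -(τ * Real.cos (θ - φ) * r₀) := by
        rw [hzθ]
        simp only [Complex.neg_re, Complex.mul_re, Complex.mul_im, Complex.ofReal_re,
          Complex.ofReal_im, Complex.exp_ofReal_mul_I_re, Complex.exp_ofReal_mul_I_im]
        ring
      have hb1 : ‖Complex.exp (-((τ:ℂ) * z θ * (r₀:ℂ)))‖ ≤ Real.exp (-(ς*r₀*τ)) := by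
        rw [Complex.norm_exp, hre]
        apply Real.exp_le_exp.mpr
        nlinarith [mul_nonneg (mul_nonneg (sub_nonneg.mpr hc) hτ) hr.le]
      have hb2 : ‖((τ:ℂ)*z θ)^2*(r₀:ℂ)^2 + 2*((τ:ℂ)*z θ*(r₀:ℂ)) + 2‖
          ≤ τ^2*r₀^2 + 2*(τ*r₀) + 2 := by
        refine le_trans (le_trans (norm_add_le _ _)
          (add_le_add_left (norm_add_le _ _) _)) ?_
        simp only [norm_mul, norm_pow, Complex.norm_ofNat, Complex.norm_real, Real.norm_eq_abs, habs_z]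
        simp [abs_of_nonneg hτ, abs_of_nonneg hr.le]
      exact mul_le_mul hb1 hb2 (norm_nonneg _) (Real.exp_nonneg _)
    calc ‖(Real.cos θ:ℂ)*e₃ θ * E τ θ‖
        = ‖((Real.cos θ:ℂ))‖ * ‖e₃ θ‖ * ‖E τ θ‖ := by
          rw [norm_mul, norm_mul]
      _ ≤ 1 * 1 * (Real.exp (-(ς*r₀*τ)) * (τ^2*r₀^2 + 2*(τ*r₀) + 2)) := by
          refine mul_le_mul (mul_le_mul ?_ (le_of_eq (habs_e3 θ)) (norm_nonneg _)
            zero_le_one) habsE (norm_nonneg _) (by norm_num)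
          rw [Complex.norm_real, Real.norm_eq_abs]
          exact Real.abs_cos_le_one θ
      _ = Real.exp (-(ς*r₀*τ)) * (τ^2*r₀^2 + 2*(τ*r₀) + 2) := by ring
  have hg0 : Tendsto (fun τ : ℝ =>
      (Real.exp (-(ς*r₀*τ)) * (τ^2*r₀^2 + 2*(τ*r₀) + 2)) * |θM - θm|) atTop (nhds 0) := by
    have hcpos : (0:ℝ) < ς*r₀ := mul_pos hς hr
    have h2' := (pm_tendsto (ς*r₀) hcpos 2).const_mul (r₀^2)
    have h1' := (pm_tendsto (ς*r₀) hcpos 1).const_mul (2*r₀)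
    have h0' := (pm_tendsto (ς*r₀) hcpos 0).const_mul 2
    have hsum := ((h2'.add h1').add h0').mul_const |θM - θm|
    simp only [mul_zero, add_zero, zero_mul] at hsum
    refine hsum.congr fun τ => ?_
    simp only [pow_zero, pow_one]
    ring
  have hErr0 : Tendsto Err atTop (nhds 0) := squeeze_zero_norm' hbound hg0
  have hfinal : Tendsto (fun τ : ℝ => L - Err τ) atTop (nhds L) := by
    have := (tendsto_const_nhds : Tendsto (fun _ : ℝ => L) atTop (nhds L)).sub hErr0
    rwa [sub_zero] at this
  rw [← hL]
  exact hfinal.congr' (heq.mono fun τ h => h.symm)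
end
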